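/- arXiv:1112.1838 — 4 statements merged into one kernel-verified Lean document; each statement's English description precedes it below -/
import Mathlib

section
/- Let φ : ℝ → M_n(ℝ) be an admissible kernel and suppose K = ∫_ℝ φ_t dt has spectral radius strictly smaller than 1. Then the series Ψ = ∑_{k=1}^∞ φ^{⋆k} converges entrywise in L¹(ℝ) (and almost everywhere, by monotone convergence of the nonnegative partial sums); the limit Ψ is entrywise nonnegative, causal, entrywise integrable, and satisfies ∫_ℝ Ψ_t dt = K (I − K)^{-1}. -/
open MeasureTheory Filter
open scoped ENNReal

/-- Convolution of matrix-valued functions: `(A ⋆ B)_t = ∫ A_s B_{t-s} ds`, computed entrywise. -/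
noncomputable def mconv {d : ℕ} (A B : ℝ → Matrix (Fin d) (Fin d) ℝ) :
    ℝ → Matrix (Fin d) (Fin d) ℝ :=
  fun t => Matrix.of fun i j => ∫ s : ℝ, ∑ k, A s i k * B (t - s) k j

/-- `convPow φ k` is the `(k+1)`-fold convolution power `φ^{⋆(k+1)}`
(so `convPow φ 0 = φ^{⋆1} = φ`); as `k` ranges over `ℕ` this covers all `φ^{⋆k}`, `k ≥ 1`. -/
noncomputable def convPow {d : ℕ} (φ : ℝ → Matrix (Fin d) (Fin d) ℝ) :
    ℕ → ℝ → Matrix (Fin d) (Fin d) ℝ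
  | 0 => φ
  | k + 1 => mconv φ (convPow φ k)

/-!
By Gelfand's formula, `ρ(K) < 1` makes `‖Kⁿ‖` decay geometrically, so `∑ Kⁿ` converges and
equals `(I - K)⁻¹`. The entries of `φ^{⋆(n+1)}` are nonnegative, causal and integrable with
`∫ φ^{⋆(n+1)} = K^{n+1}`, since integration turns convolution into matrix multiplication. Hence the
`L¹` norms of the series `∑ φ^{⋆k}` are summable, which gives a.e. and `L¹` convergence, and the
integral of the sum is `∑_{n ≥ 1} Kⁿ = K (I - K)⁻¹`.
-/

open Topology Finset
open scoped Convolution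

section SpectralRadius

variable {A : Type*} [NormedRing A] [NormedAlgebra ℂ A] [CompleteSpace A]

theorem summable_norm_pow_of_spectralRadius_lt_one {a : A} (ha : spectralRadius ℂ a < 1) :
    Summable fun n : ℕ => ‖a ^ n‖ := by
  obtain ⟨r, har, hr1⟩ := ENNReal.lt_iff_exists_nnreal_btwn.1 ha
  have hgeom : Summable fun n : ℕ => (r : ℝ) ^ n :=
    summable_geometric_of_lt_one r.coe_nonneg (by exact_mod_cast hr1)
  refine .of_norm_bounded_eventually_nat hgeom ?_
  filter_upwards [(spectrum.gelfand_formula a).eventually_lt_const har, eventually_gt_atTop 0]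
    with n hn hn0
  rw [one_div, ENNReal.rpow_inv_lt_iff (by positivity), ENNReal.rpow_natCast] at hn
  rw [norm_norm]
  exact_mod_cast hn.le

end SpectralRadius

namespace Matrix

variable {ι : Type*} [Fintype ι] [DecidableEq ι]

theorem summable_pow_of_spectralRadius_lt_one (K : Matrix ι ι ℝ)
    (hK : spectralRadius ℂ (K.map Complex.ofReal) < 1) : Summable fun n : ℕ => K ^ n := by
  -- Any submultiplicative norm will do: the spectral radius does not depend on it.
  let _ := Matrix.linftyOpNormedRing (n := ι) (α := ℂ)
  let _ := Matrix.linftyOpNormedAlgebra (n := ι) (R := ℂ) (α := ℂ)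
  have hsum : Summable fun n : ℕ => K.map Complex.ofReal ^ n :=
    .of_norm (summable_norm_pow_of_spectralRadius_lt_one hK)
  have hre : ∀ n : ℕ, K ^ n = (K.map Complex.ofReal ^ n).map Complex.re := by
    intro n
    rw [show K.map Complex.ofReal = K.map Complex.ofRealHom from rfl, ← Matrix.map_pow]
    ext
    simp
  simp_rw [hre]
  exact hsum.map Complex.reAddGroupHom.mapMatrix (continuous_id.matrix_map Complex.continuous_re)

theorem mul_inv_one_sub_eq_tsum_pow_succ {R : Type*} [CommRing R] [TopologicalSpace R]
    [IsTopologicalRing R] [T2Space R] (K : Matrix ι ι R) (hK : Summable fun n : ℕ => K ^ n) :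
    K * (1 - K)⁻¹ = ∑' n : ℕ, K ^ (n + 1) := by
  rw [inv_eq_right_inv hK.one_sub_mul_tsum_pow, ← hK.tsum_mul_left]
  simp_rw [pow_succ']

end Matrix

section SeriesOfIntegrable

variable {α E : Type*} [MeasurableSpace α] {μ : Measure α} [NormedAddCommGroup E]

theorem tsum_lintegral_enorm_ne_top {ι : Type*} {f : ι → α → E} (hf : ∀ i, Integrable (f i) μ)
    (hsum : Summable fun i => ∫ a, ‖f i a‖ ∂μ) : ∑' i, ∫⁻ a, ‖f i a‖ₑ ∂μ ≠ ∞ := by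
  simp_rw [← ofReal_integral_norm_eq_lintegral_enorm (hf _)]
  rw [← ENNReal.ofReal_tsum_of_nonneg (fun i => integral_nonneg fun _ => norm_nonneg _) hsum]
  exact ENNReal.ofReal_ne_top

theorem ae_summable_norm_of_summable_integral_norm {ι : Type*} [Countable ι] {f : ι → α → E}
    (hf : ∀ i, Integrable (f i) μ) (hsum : Summable fun i => ∫ a, ‖f i a‖ ∂μ) :
    ∀ᵐ a ∂μ, Summable fun i => ‖f i a‖ :=
  summable_norm_of_tsum_eLpNorm_ne_top le_rfl (fun i => (hf i).1) <| by
    simpa only [eLpNorm_one_eq_lintegral_enorm] using tsum_lintegral_enorm_ne_top hf hsum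

variable [CompleteSpace E] {f : ℕ → α → E}

theorem integrable_tsum_of_summable_integral_norm (hf : ∀ n, Integrable (f n) μ)
    (hsum : Summable fun n => ∫ a, ‖f n a‖ ∂μ) : Integrable (fun a => ∑' n, f n a) μ := by
  have hmeas : AEStronglyMeasurable (fun a => ∑' n, f n a) μ :=
    aestronglyMeasurable_of_tendsto_ae atTop
      (fun N => aestronglyMeasurable_fun_sum (range N) fun n _ => (hf n).1)
      ((ae_summable_norm_of_summable_integral_norm hf hsum).mono fun a ha =>
        ha.of_norm.hasSum.tendsto_sum_nat)
  refine ⟨hmeas, ?_⟩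
  calc ∫⁻ a, ‖∑' n, f n a‖ₑ ∂μ ≤ ∫⁻ a, ∑' n, ‖f n a‖ₑ ∂μ :=
        lintegral_mono fun _ => enorm_tsum_le_tsum_enorm
    _ = ∑' n, ∫⁻ a, ‖f n a‖ₑ ∂μ := lintegral_tsum fun n => (hf n).1.enorm
    _ < ∞ := (tsum_lintegral_enorm_ne_top hf hsum).lt_top

theorem tendsto_integral_norm_sum_range_sub_tsum (hf : ∀ n, Integrable (f n) μ)
    (hsum : Summable fun n => ∫ a, ‖f n a‖ ∂μ) :
    Tendsto (fun N => ∫ a, ‖∑ n ∈ range N, f n a - ∑' n, f n a‖ ∂μ) atTop (𝓝 0) := by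
  refine squeeze_zero (fun N => integral_nonneg fun _ => norm_nonneg _) (fun N => ?_)
    (tendsto_sum_nat_add fun n => ∫ a, ‖f n a‖ ∂μ)
  have htail_int : ∀ n, Integrable (fun a => ‖f (n + N) a‖) μ := fun n => (hf _).norm
  have htail_sum : Summable fun n => ∫ a, ‖‖f (n + N) a‖‖ ∂μ := by
    simpa only [norm_norm] using (summable_nat_add_iff N).2 hsum
  calc ∫ a, ‖∑ n ∈ range N, f n a - ∑' n, f n a‖ ∂μ ≤ ∫ a, ∑' n, ‖f (n + N) a‖ ∂μ := by
        refine integral_mono_of_nonneg (ae_of_all _ fun _ => norm_nonneg _)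
          (integrable_tsum_of_summable_integral_norm htail_int htail_sum) ?_
        filter_upwards [ae_summable_norm_of_summable_integral_norm hf hsum] with a ha
        rw [← ha.of_norm.sum_add_tsum_nat_add N, sub_add_cancel_left, norm_neg]
        exact norm_tsum_le_tsum_norm ((summable_nat_add_iff N).2 ha)
    _ = ∑' n, ∫ a, ‖f (n + N) a‖ ∂μ :=
        (integral_tsum_of_summable_integral_norm htail_int htail_sum).symm

end SeriesOfIntegrable

section MatrixConvolution

variable {d : ℕ}

noncomputable def dotProductCLM (d : ℕ) : (Fin d → ℝ) →L[ℝ] (Fin d → ℝ) →L[ℝ] ℝ :=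
  (dotProductBilin ℝ ℝ).toContinuousBilinearMap

/- Pairing a row with a column inside the integral makes this hold at every `t`, whereas splitting
the sum over `k` out of the integral would need integrability of each summand. -/
theorem mconv_apply_eq_convolution (A B : ℝ → Matrix (Fin d) (Fin d) ℝ) (t : ℝ) (i j : Fin d) :
    mconv A B t i j = ((fun s k => A s i k) ⋆[dotProductCLM d] fun s k => B s k j) t := by
  rw [convolution_def]
  rfl

variable {A B : ℝ → Matrix (Fin d) (Fin d) ℝ}

theorem mconv_nonneg (hA : ∀ t i j, 0 ≤ A t i j) (hB : ∀ t i j, 0 ≤ B t i j) (t : ℝ)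
    (i j : Fin d) : 0 ≤ mconv A B t i j :=
  integral_nonneg fun s => sum_nonneg fun k _ => mul_nonneg (hA s i k) (hB (t - s) k j)

theorem mconv_eq_zero_of_neg (hA : ∀ t < (0 : ℝ), A t = 0) (hB : ∀ t < (0 : ℝ), B t = 0)
    {t : ℝ} (ht : t < 0) : mconv A B t = 0 := by
  ext i j
  have hzero : ∀ s, ∑ k, A s i k * B (t - s) k j = 0 := by
    intro s
    rcases lt_or_ge s 0 with hs | hs
    · simp [hA s hs]
    · simp [hB (t - s) (by linarith)]
  simp [mconv, hzero]

theorem integrable_mconv (hA : ∀ i j, Integrable fun t => A t i j)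
    (hB : ∀ i j, Integrable fun t => B t i j) (i j : Fin d) :
    Integrable fun t => mconv A B t i j := by
  simp_rw [mconv_apply_eq_convolution]
  exact (integrable_pi_iff.2 fun k => hA i k).integrable_convolution _
    (integrable_pi_iff.2 fun k => hB k j)

theorem integral_mconv (hA : ∀ i j, Integrable fun t => A t i j)
    (hB : ∀ i j, Integrable fun t => B t i j) :
    (Matrix.of fun i j => ∫ t, mconv A B t i j) =
      (Matrix.of fun i j => ∫ t, A t i j) * Matrix.of fun i j => ∫ t, B t i j := by
  ext i j
  have hrow : Integrable (fun s k => A s i k : ℝ → Fin d → ℝ) :=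
    integrable_pi_iff.2 fun k => hA i k
  have hcol : Integrable (fun s k => B s k j : ℝ → Fin d → ℝ) :=
    integrable_pi_iff.2 fun k => hB k j
  simp_rw [Matrix.of_apply, mconv_apply_eq_convolution]
  rw [integral_convolution _ hrow hcol]
  simp [dotProductCLM, Matrix.mul_apply, dotProduct, eval_integral (fun k => hA i k),
    eval_integral (fun k => hB k j)]

variable {φ : ℝ → Matrix (Fin d) (Fin d) ℝ}

theorem convPow_nonneg (hφ : ∀ t i j, 0 ≤ φ t i j) (n : ℕ) (t : ℝ) (i j : Fin d) :
    0 ≤ convPow φ n t i j := by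
  induction n generalizing t i j with
  | zero => exact hφ t i j
  | succ n ih => exact mconv_nonneg hφ ih t i j

theorem convPow_eq_zero_of_neg (hφ : ∀ t < (0 : ℝ), φ t = 0) (n : ℕ) {t : ℝ} (ht : t < 0) :
    convPow φ n t = 0 := by
  induction n generalizing t with
  | zero => exact hφ t ht
  | succ n ih => exact mconv_eq_zero_of_neg hφ (fun _ => ih) ht

theorem integrable_convPow (hφ : ∀ i j, Integrable fun t => φ t i j) (n : ℕ) (i j : Fin d) :
    Integrable fun t => convPow φ n t i j := by
  induction n generalizing i j with
  | zero => exact hφ i j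
  | succ n ih => exact integrable_mconv hφ ih i j

theorem integral_convPow (hφ : ∀ i j, Integrable fun t => φ t i j) (n : ℕ) :
    (Matrix.of fun i j => ∫ t, convPow φ n t i j) =
      (Matrix.of fun i j => ∫ t, φ t i j) ^ (n + 1) := by
  induction n with
  | zero => simp [convPow]
  | succ n ih => rw [convPow, integral_mconv hφ (integrable_convPow hφ n), ih, ← pow_succ']

end MatrixConvolution

theorem stmt_5_general {d : ℕ} (φ : ℝ → Matrix (Fin d) (Fin d) ℝ)
    (hpos : ∀ t i j, 0 ≤ φ t i j)
    (hint : ∀ i j, Integrable fun t => φ t i j)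
    (hcausal : ∀ t < (0 : ℝ), φ t = 0)
    (K : Matrix (Fin d) (Fin d) ℝ)
    (hK : K = Matrix.of fun i j => ∫ t : ℝ, φ t i j)
    (hρ : spectralRadius ℂ (K.map Complex.ofReal) < 1) :
    ∃ Ψ : ℝ → Matrix (Fin d) (Fin d) ℝ,
      (∀ t i j, 0 ≤ Ψ t i j) ∧
      (∀ t < (0 : ℝ), Ψ t = 0) ∧
      (∀ i j, Integrable fun t => Ψ t i j) ∧
      (∀ᵐ t : ℝ, ∀ i j, HasSum (fun k : ℕ => convPow φ k t i j) (Ψ t i j)) ∧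
      (∀ i j, Tendsto
        (fun N : ℕ => ∫ t : ℝ, |(∑ k ∈ Finset.range N, convPow φ k t i j) - Ψ t i j|)
        atTop (nhds 0)) ∧
      (Matrix.of fun i j => ∫ t : ℝ, Ψ t i j) = K * (1 - K)⁻¹ := by
  have hKpow : Summable fun n : ℕ => K ^ n := K.summable_pow_of_spectralRadius_lt_one hρ
  have hKsucc : Summable fun n : ℕ => K ^ (n + 1) := (summable_nat_add_iff 1).2 hKpow
  have hint_pow := integrable_convPow hint
  have hintegral : ∀ n i j, ∫ t, convPow φ n t i j = (K ^ (n + 1)) i j := fun n i j => by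
    rw [hK, ← integral_convPow hint n, Matrix.of_apply]
  have hsum : ∀ i j, Summable fun n => ∫ t, ‖convPow φ n t i j‖ := fun i j => by
    simp_rw [Real.norm_of_nonneg (convPow_nonneg hpos _ _ _ _), hintegral]
    exact Pi.summable.1 (Pi.summable.1 hKsucc i) j
  refine ⟨fun t => Matrix.of fun i j => ∑' n, convPow φ n t i j,
    fun t i j => tsum_nonneg fun n => convPow_nonneg hpos n t i j, fun t ht => ?_,
    fun i j => integrable_tsum_of_summable_integral_norm (hint_pow · i j) (hsum i j), ?_,
    fun i j => by simpa only [Real.norm_eq_abs, Matrix.of_apply] using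
      tendsto_integral_norm_sum_range_sub_tsum (hint_pow · i j) (hsum i j), ?_⟩
  · ext i j
    simp [convPow_eq_zero_of_neg hcausal _ ht]
  · filter_upwards [ae_all_iff.2 fun i => ae_all_iff.2 fun j =>
      ae_summable_norm_of_summable_integral_norm (hint_pow · i j) (hsum i j)] with t ht i j
    exact (ht i j).of_norm.hasSum
  · ext i j
    rw [K.mul_inv_one_sub_eq_tsum_pow_succ hKpow,
      ← (Pi.hasSum.1 (Pi.hasSum.1 hKsucc.hasSum i) j).tsum_eq]
    simp only [Matrix.of_apply]
    rw [← integral_tsum_of_summable_integral_norm (hint_pow · i j) (hsum i j)]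
    simp_rw [hintegral]

/-- For an admissible kernel `φ` with `K = ∫ φ` of spectral radius `< 1`, the
series `Ψ = ∑_{k ≥ 1} φ^{⋆k}` converges entrywise in `L¹` and almost everywhere; `Ψ` is entrywise
nonnegative, causal, entrywise integrable, and `∫ Ψ = K (I - K)⁻¹`. -/
theorem stmt_5 {d : ℕ} (φ : ℝ → Matrix (Fin d) (Fin d) ℝ)
    (hmeas : ∀ i j, Measurable fun t => φ t i j)
    (hpos : ∀ t i j, 0 ≤ φ t i j)
    (hint : ∀ i j, Integrable fun t => φ t i j)
    (hcausal : ∀ t < (0 : ℝ), φ t = 0)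
    (K : Matrix (Fin d) (Fin d) ℝ)
    (hK : K = Matrix.of fun i j => ∫ t : ℝ, φ t i j)
    (hρ : spectralRadius ℂ (K.map Complex.ofReal) < 1) :
    ∃ Ψ : ℝ → Matrix (Fin d) (Fin d) ℝ,
      (∀ t i j, 0 ≤ Ψ t i j) ∧
      (∀ t < (0 : ℝ), Ψ t = 0) ∧
      (∀ i j, Integrable fun t => Ψ t i j) ∧
      (∀ᵐ t : ℝ, ∀ i j, HasSum (fun k : ℕ => convPow φ k t i j) (Ψ t i j)) ∧
      (∀ i j, Tendsto
        (fun N : ℕ => ∫ t : ℝ, |(∑ k ∈ Finset.range N, convPow φ k t i j) - Ψ t i j|)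
        atTop (nhds 0)) ∧
      (Matrix.of fun i j => ∫ t : ℝ, Ψ t i j) = K * (1 - K)⁻¹ :=
  stmt_5_general φ hpos hint hcausal K hK hρ
end

section
/- Let φ : ℝ → M_n(ℝ) be an admissible kernel such that φ̂₀ = ∫_ℝ φ_t dt has spectral radius strictly smaller than 1. Then for every complex number z with Re z ≥ 0, the matrix I − φ̂_z is invertible; equivalently, 1 is not an eigenvalue of φ̂_z for any z in the closed right half-plane. -/
/-!
For `t ≥ 0` and `Re z ≥ 0` we have `|e^{-zt}| ≤ 1`, so the entries of `φ̂_z` are dominated in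
modulus by those of `φ̂₀`. Entrywise domination passes to all powers, hence to their
`ℓ∞`-operator norms, and Gelfand's formula then gives `ρ(φ̂_z) ≤ ρ(φ̂₀) < 1`; in particular `1` lies
in the resolvent set of `φ̂_z`.
-/

open MeasureTheory
open scoped Matrix.Norms.Operator

namespace Matrix

variable {n : Type*} [Fintype n]

lemma norm_pow_apply_le_pow_apply [DecidableEq n] {R : Type*} [SeminormedRing R] [NormOneClass R]
    {A : Matrix n n ℝ} {B : Matrix n n R} (h : ∀ i j, ‖B i j‖ ≤ A i j) (k : ℕ) (i j : n) :
    ‖(B ^ k) i j‖ ≤ (A ^ k) i j := by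
  induction k generalizing j with
  | zero => by_cases hij : i = j <;> simp [hij]
  | succ k ih =>
    rw [pow_succ, pow_succ, mul_apply, mul_apply]
    refine (norm_sum_le _ _).trans (Finset.sum_le_sum fun l _ => ?_)
    exact (norm_mul_le _ _).trans <|
      mul_le_mul (ih l) (h l j) (norm_nonneg _) ((norm_nonneg _).trans (ih l))

lemma linfty_opNNNorm_le_of_norm_apply_le {m : Type*} [Fintype m] {α β : Type*}
    [SeminormedAddCommGroup α] [SeminormedAddCommGroup β] {A : Matrix m n α} {B : Matrix m n β}
    (h : ∀ i j, ‖B i j‖ ≤ ‖A i j‖) : ‖B‖₊ ≤ ‖A‖₊ := by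
  rw [linfty_opNNNorm_def, linfty_opNNNorm_def]
  exact Finset.sup_mono_fun fun i _ => Finset.sum_le_sum fun j _ => h i j

lemma spectralRadius_le_of_norm_apply_le [DecidableEq n] {A : Matrix n n ℝ} {B : Matrix n n ℂ}
    (h : ∀ i j, ‖B i j‖ ≤ A i j) :
    spectralRadius ℂ B ≤ spectralRadius ℂ (A.map Complex.ofReal) := by
  have hpow (k : ℕ) : ‖B ^ k‖₊ ≤ ‖A.map Complex.ofReal ^ k‖₊ := by
    rw [show A.map Complex.ofReal ^ k = (A ^ k).map Complex.ofReal from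
      (map_pow Complex.ofRealHom.mapMatrix A k).symm]
    refine linfty_opNNNorm_le_of_norm_apply_le fun i j => ?_
    simpa using (norm_pow_apply_le_pow_apply h k i j).trans (le_abs_self _)
  refine le_of_tendsto_of_tendsto'
    (spectrum.pow_nnnorm_pow_one_div_tendsto_nhds_spectralRadius B)
    (spectrum.pow_nnnorm_pow_one_div_tendsto_nhds_spectralRadius (A.map Complex.ofReal))
    fun k => ?_
  gcongr
  exact hpow k

end Matrix

lemma norm_exp_neg_mul_mul_le {z : ℂ} (hz : 0 ≤ z.re) {t x : ℝ} (ht : 0 ≤ t) (hx : 0 ≤ x) :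
    ‖Complex.exp (-(z * t)) * (x : ℂ)‖ ≤ x := by
  rw [norm_mul, Complex.norm_real, Complex.norm_exp, Real.norm_of_nonneg hx]
  refine mul_le_of_le_one_left hx (Real.exp_le_one_iff.mpr ?_)
  simpa [Complex.mul_re] using mul_nonneg hz ht

lemma norm_integral_exp_neg_mul_mul_le {f : ℝ → ℝ} (hf : Integrable f) (hpos : ∀ t, 0 ≤ f t)
    (hcausal : ∀ t < 0, f t = 0) {z : ℂ} (hz : 0 ≤ z.re) :
    ‖∫ t : ℝ, Complex.exp (-(z * t)) * (f t : ℂ)‖ ≤ ∫ t, f t := by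
  refine (norm_integral_le_integral_norm _).trans <|
    integral_mono_of_nonneg (.of_forall fun _ => norm_nonneg _) hf (.of_forall fun t => ?_)
  rcases lt_or_ge t 0 with ht | ht
  · simp [hcausal t ht]
  · exact norm_exp_neg_mul_mul_le hz ht (hpos t)

theorem stmt_8_general {d : ℕ} (φ : ℝ → Matrix (Fin d) (Fin d) ℝ)
    (hpos : ∀ t i j, 0 ≤ φ t i j)
    (hint : ∀ i j, Integrable fun t => φ t i j)
    (hcausal : ∀ t < (0 : ℝ), φ t = 0)
    (hρ : spectralRadius ℂ
      ((Matrix.of fun i j => ∫ t : ℝ, φ t i j).map Complex.ofReal) < 1) :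
    ∀ z : ℂ, 0 ≤ z.re →
      IsUnit (1 - Matrix.of fun i j => ∫ t : ℝ, Complex.exp (-(z * t)) * ((φ t i j : ℝ) : ℂ)) ∧
      (1 : ℂ) ∉ spectrum ℂ
        (Matrix.of fun i j => ∫ t : ℝ, Complex.exp (-(z * t)) * ((φ t i j : ℝ) : ℂ)) := by
  intro z hz
  set B : Matrix (Fin d) (Fin d) ℂ :=
    Matrix.of fun i j => ∫ t : ℝ, Complex.exp (-(z * t)) * ((φ t i j : ℝ) : ℂ)
  have hB : spectralRadius ℂ B < ‖(1 : ℂ)‖₊ := by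
    refine lt_of_le_of_lt (Matrix.spectralRadius_le_of_norm_apply_le fun i j => ?_)
      (by simpa using hρ)
    exact norm_integral_exp_neg_mul_mul_le (hint i j) (hpos · i j)
      (fun t ht => by simp [hcausal t ht]) hz
  have hunit : IsUnit (algebraMap ℂ _ 1 - B) :=
    spectrum.mem_resolventSet_iff.mp (spectrum.mem_resolventSet_of_spectralRadius_lt hB)
  exact ⟨by rwa [map_one] at hunit, spectrum.notMem_iff.mpr hunit⟩

/-- For an admissible kernel `φ` such that `φ̂₀ = ∫ φ` has spectral radius
strictly smaller than `1`, the matrix `I - φ̂_z` is invertible for every `z` with `Re z ≥ 0`;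
equivalently, `1` is not an eigenvalue of `φ̂_z` for any `z` in the closed right half-plane. -/
theorem stmt_8 {d : ℕ} (φ : ℝ → Matrix (Fin d) (Fin d) ℝ)
    (hmeas : ∀ i j, Measurable fun t => φ t i j)
    (hpos : ∀ t i j, 0 ≤ φ t i j)
    (hint : ∀ i j, Integrable fun t => φ t i j)
    (hcausal : ∀ t < (0 : ℝ), φ t = 0)
    (hρ : spectralRadius ℂ
      ((Matrix.of fun i j => ∫ t : ℝ, φ t i j).map Complex.ofReal) < 1) :
    ∀ z : ℂ, 0 ≤ z.re →
      IsUnit (1 - Matrix.of fun i j => ∫ t : ℝ, Complex.exp (-(z * t)) * ((φ t i j : ℝ) : ℂ)) ∧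
      (1 : ℂ) ∉ spectrum ℂ
        (Matrix.of fun i j => ∫ t : ℝ, Complex.exp (-(z * t)) * ((φ t i j : ℝ) : ℂ)) :=
  stmt_8_general φ hpos hint hcausal hρ
end

section
/- Let f : ℝ → [0, ∞] be measurable, let h > 0 and τ ∈ ℝ. Then (1/h) ∫_{t=0}^{h} ∫_{t'=τ}^{τ+h} f(t − t') dt' dt = ∫_ℝ f(s) g^{(h)}(s + τ) ds, where g^{(h)}(u) = max(1 − |u|/h, 0). -/
/-!
Substituting `s = t - t'` turns the inner integral into `∫ f(s) 1_{(s+τ, s+τ+h]}(t) ds`, and after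
exchanging the order of integration the weight of `f(s)` is the length of the overlap of the
window `(0, h]` with its translate `(s+τ, s+τ+h]`, which is `h - |s+τ|` when positive, i.e.
`h · g⁽ʰ⁾(s+τ)`.
-/

open MeasureTheory Set
open scoped ENNReal

theorem lintegral_setLIntegral_comp_sub {G : Type*} [MeasurableSpace G] [AddCommGroup G]
    [MeasurableAdd₂ G] [MeasurableNeg G] {μ : Measure G} [SFinite μ] [μ.IsAddLeftInvariant]
    [μ.IsNegInvariant] {f : G → ℝ≥0∞} (hf : Measurable f) (A : Set G) {B : Set G}
    (hB : MeasurableSet B) :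
    ∫⁻ t in A, ∫⁻ t' in B, f (t - t') ∂μ ∂μ = ∫⁻ s, f s * μ ((· - s) ⁻¹' B ∩ A) ∂μ := by
  calc ∫⁻ t in A, ∫⁻ t' in B, f (t - t') ∂μ ∂μ
      = ∫⁻ t in A, ∫⁻ s, f s * B.indicator 1 (t - s) ∂μ ∂μ := by
        refine lintegral_congr fun t => ?_
        rw [← lintegral_indicator hB, ← lintegral_sub_left_eq_self _ t]
        refine lintegral_congr fun s => ?_
        by_cases hs : t - s ∈ B <;> simp [hs, sub_sub_cancel]
    _ = ∫⁻ s, ∫⁻ t in A, f s * B.indicator 1 (t - s) ∂μ ∂μ := by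
        refine lintegral_lintegral_swap (Measurable.aemeasurable ?_)
        exact (hf.comp measurable_snd).mul
          ((measurable_one.indicator hB).comp (measurable_fst.sub measurable_snd))
    _ = ∫⁻ s, f s * μ ((· - s) ⁻¹' B ∩ A) ∂μ := by
        refine lintegral_congr fun s => ?_
        have hpre : MeasurableSet ((· - s) ⁻¹' B) := measurable_sub_const s hB
        have hind : Measurable fun t => B.indicator (1 : G → ℝ≥0∞) (t - s) :=
          (measurable_one.indicator hB).comp (measurable_sub_const s)
        rw [lintegral_const_mul _ hind,
          ← Measure.restrict_apply hpre, ← lintegral_indicator_one hpre]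
        rfl

theorem Real.volume_Ioc_add_inter_Ioc (a h : ℝ) :
    volume (Ioc a (a + h) ∩ Ioc 0 h) = ENNReal.ofReal (h - |a|) := by
  rw [Ioc_inter_Ioc, Real.volume_Ioc]
  congr 1
  rcases le_total 0 a with ha | ha
  · rw [abs_of_nonneg ha, max_eq_left ha, min_eq_right (by linarith)]
  · rw [abs_of_nonpos ha, max_eq_right ha, min_eq_left (by linarith)]
    ring

/-- The triangle function `g⁽ʰ⁾` of the paper. -/
noncomputable def triangle (h u : ℝ) : ℝ := max (1 - |u| / h) 0

theorem ofReal_sub_abs_eq_ofReal_triangle_mul {h : ℝ} (hh : 0 < h) (u : ℝ) :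
    ENNReal.ofReal (h - |u|) = ENNReal.ofReal (triangle h u) * ENNReal.ofReal h := by
  rw [triangle, ← ENNReal.ofReal_mul (le_max_right _ _), max_mul_of_nonneg _ _ hh.le, zero_mul,
    sub_mul, div_mul_cancel₀ _ hh.ne', one_mul, ENNReal.ofReal_max, ENNReal.ofReal_zero,
    max_eq_left zero_le]

/-- For a measurable `f : ℝ → [0,∞]`, `h > 0` and `τ ∈ ℝ`,
`(1/h) ∫_{t=0}^{h} ∫_{t'=τ}^{τ+h} f(t - t') dt' dt = ∫_ℝ f(s) g⁽ʰ⁾(s + τ) ds`,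
where `g⁽ʰ⁾(u) = max(1 - |u|/h, 0)`. -/
theorem stmt_13 (f : ℝ → ℝ≥0∞) (hf : Measurable f) (h τ : ℝ) (hh : 0 < h) :
    (∫⁻ t in Set.Ioc (0 : ℝ) h, ∫⁻ t' in Set.Ioc τ (τ + h), f (t - t')) / ENNReal.ofReal h =
      ∫⁻ s : ℝ, f s * ENNReal.ofReal (max (1 - |s + τ| / h) 0) := by
  have hoverlap : ∀ s : ℝ, volume ((· - s) ⁻¹' Ioc τ (τ + h) ∩ Ioc 0 h)
      = ENNReal.ofReal (triangle h (s + τ)) * ENNReal.ofReal h := fun s => by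
    rw [preimage_sub_const_Ioc, add_right_comm, Real.volume_Ioc_add_inter_Ioc, add_comm τ s,
      ofReal_sub_abs_eq_ofReal_triangle_mul hh]
  simp_rw [lintegral_setLIntegral_comp_sub hf _ measurableSet_Ioc, hoverlap, ← mul_assoc]
  rw [lintegral_mul_const' _ _ ENNReal.ofReal_ne_top,
    ENNReal.mul_div_cancel_right (ENNReal.ofReal_pos.mpr hh).ne' ENNReal.ofReal_ne_top]
  rfl
end

section
/- Let Ψ¹¹, Ψ¹² : ℝ → ℝ be integrable and let λ̄ > 0. Define v¹¹(τ) = λ̄ ( Ψ¹¹(τ) + Ψ¹¹(−τ) + ∫_ℝ [Ψ¹¹(s−τ)Ψ¹¹(s) + Ψ¹²(s−τ)Ψ¹²(s)] ds ) and v¹²(τ) = λ̄ ( Ψ¹²(τ) + Ψ¹²(−τ) + ∫_ℝ [Ψ¹¹(s−τ)Ψ¹²(s) + Ψ¹²(s−τ)Ψ¹¹(s)] ds ). Then for every ω ∈ ℝ: λ̄ + v̂¹¹(ω) + v̂¹²(ω) = λ̄ |1 + Ψ̂¹¹(ω) + Ψ̂¹²(ω)|² and λ̄ + v̂¹¹(ω)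 − v̂¹²(ω) = λ̄ |1 + Ψ̂¹¹(ω) − Ψ̂¹²(ω)|², where f̂(ω) = ∫_ℝ e^{−iωτ} f(τ) dτ denotes the Fourier transform. -/
open MeasureTheory Complex ComplexConjugate

/-!
Write `A = Ψ̂¹¹(ω)` and `B = Ψ̂¹²(ω)`. Reflection `τ ↦ -τ` conjugates a Fourier transform, and by
Fubini and translation invariance the transform of the cross-correlation `τ ↦ ∫ g(s-τ) h(s) ds`
is `ĥ · conj ĝ`. Hence `v̂¹¹ = λ̄ (A + Ā + |A|² + |B|²)` and `v̂¹² = λ̄ (B + B̄ + BĀ + AB̄)`, and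
`λ̄ + v̂¹¹ ± v̂¹² = λ̄ (1 + A ± B)(1 + Ā ± B̄)` is then an algebraic identity.
-/

noncomputable def angularFourier (f : ℝ → ℝ) (ω : ℝ) : ℂ :=
  ∫ τ : ℝ, cexp (-(I * ω * τ)) * f τ

noncomputable def crossCorrelation (g h : ℝ → ℝ) (τ : ℝ) : ℝ :=
  ∫ s, g (s - τ) * h s

section Character

variable (ω : ℝ)

lemma norm_cexp_neg_I_mul (τ : ℝ) : ‖cexp (-(I * ω * τ))‖ = 1 := by
  rw [norm_exp]
  simp

lemma conj_cexp_neg_I_mul (τ : ℝ) : conj (cexp (-(I * ω * τ))) = cexp (-(I * ω * ↑(-τ))) := by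
  rw [← exp_conj]
  simp

lemma cexp_neg_I_mul_sub (s u : ℝ) :
    cexp (-(I * ω * ↑(s - u))) = cexp (-(I * ω * s)) * conj (cexp (-(I * ω * u))) := by
  rw [conj_cexp_neg_I_mul, ← exp_add]
  push_cast
  ring_nf

lemma MeasureTheory.Integrable.cexp_neg_I_mul_mul {α : Type*} [MeasurableSpace α] {μ : Measure α}
    {θ f : α → ℝ} (hθ : Measurable θ) (hf : Integrable f μ) :
    Integrable (fun x => cexp (-(I * ω * θ x)) * f x) μ :=
  hf.ofReal.bdd_mul (by fun_prop) (.of_forall fun x => (norm_cexp_neg_I_mul ω (θ x)).le)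

end Character

section CrossCorrelation

variable {g h : ℝ → ℝ}

lemma integrable_crossCorrelation_integrand (hg : Integrable g) (hh : Integrable h) :
    Integrable (fun p : ℝ × ℝ => g (p.2 - p.1) * h p.2) (volume.prod volume) := by
  simpa [mul_comm] using hh.convolution_integrand (ContinuousLinearMap.mul ℝ ℝ) hg.comp_neg

lemma MeasureTheory.Integrable.crossCorrelation (hg : Integrable g) (hh : Integrable h) :
    Integrable (crossCorrelation g h) :=
  (integrable_crossCorrelation_integrand hg hh).integral_prod_left

lemma ae_integral_add_eq_crossCorrelation_add {g' h' : ℝ → ℝ} (hg : Integrable g)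
    (hh : Integrable h) (hg' : Integrable g') (hh' : Integrable h') :
    ∀ᵐ τ, ∫ s, (g (s - τ) * h s + g' (s - τ) * h' s)
      = crossCorrelation g h τ + crossCorrelation g' h' τ := by
  filter_upwards [(integrable_crossCorrelation_integrand hg hh).prod_right_ae,
    (integrable_crossCorrelation_integrand hg' hh').prod_right_ae] with τ hτ hτ'
  exact integral_add hτ hτ'

end CrossCorrelation

section AngularFourier

variable {f g h : ℝ → ℝ} (ω : ℝ)

lemma angularFourier_congr_ae (hfg : f =ᵐ[volume] g) : angularFourier f ω = angularFourier g ω :=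
  integral_congr_ae (hfg.mono fun τ hτ => by simp only [hτ])

lemma angularFourier_add (hf : Integrable f) (hg : Integrable g) :
    angularFourier (fun τ => f τ + g τ) ω = angularFourier f ω + angularFourier g ω := by
  simp only [angularFourier, ofReal_add, mul_add]
  exact integral_add (hf.cexp_neg_I_mul_mul ω measurable_id)
    (hg.cexp_neg_I_mul_mul ω measurable_id)

lemma angularFourier_const_mul (c : ℝ) (f : ℝ → ℝ) :
    angularFourier (fun τ => c * f τ) ω = c * angularFourier f ω := by
  simp only [angularFourier, ofReal_mul, mul_left_comm _ (c : ℂ)]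
  exact integral_const_mul _ _

lemma angularFourier_comp_neg (f : ℝ → ℝ) :
    angularFourier (fun τ => f (-τ)) ω = conj (angularFourier f ω) := by
  rw [angularFourier, angularFourier, ← integral_conj, ← integral_neg_eq_self]
  simp [conj_cexp_neg_I_mul]

lemma angularFourier_crossCorrelation (hg : Integrable g) (hh : Integrable h) :
    angularFourier (crossCorrelation g h) ω = angularFourier h ω * conj (angularFourier g ω) := by
  have hF := (integrable_crossCorrelation_integrand hg hh).cexp_neg_I_mul_mul ω measurable_fst
  calc angularFourier (crossCorrelation g h) ω
      = ∫ τ : ℝ, ∫ s : ℝ, cexp (-(I * ω * τ)) * ((g (s - τ) * h s : ℝ) : ℂ) := by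
        rw [angularFourier]
        congr 1; funext τ
        rw [crossCorrelation, ← integral_complex_ofReal, ← integral_const_mul]
    _ = ∫ s : ℝ, ∫ τ : ℝ, cexp (-(I * ω * τ)) * ((g (s - τ) * h s : ℝ) : ℂ) :=
        integral_integral_swap hF
    _ = ∫ s : ℝ, ∫ u : ℝ, cexp (-(I * ω * ↑(s - u))) * ((g u * h s : ℝ) : ℂ) := by
        congr 1; funext s
        rw [← integral_sub_left_eq_self _ volume s]
        simp only [sub_sub_cancel]
    _ = ∫ s : ℝ, cexp (-(I * ω * s)) * h s * conj (angularFourier g ω) := by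
        congr 1; funext s
        rw [angularFourier, ← integral_conj, ← integral_const_mul]
        congr 1; funext u
        rw [cexp_neg_I_mul_sub]
        simp only [map_mul, conj_ofReal, ofReal_mul]
        ring
    _ = angularFourier h ω * conj (angularFourier g ω) := integral_mul_const _ _

lemma angularFourier_of_covariance_form {v a b a' b' : ℝ → ℝ} {lam : ℝ} (hg : Integrable g)
    (ha : Integrable a) (hb : Integrable b) (ha' : Integrable a') (hb' : Integrable b')
    (hv : ∀ τ, v τ = lam * (g τ + g (-τ) + ∫ s, (a (s - τ) * b s + a' (s - τ) * b' s))) :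
    angularFourier v ω = lam * (angularFourier g ω + conj (angularFourier g ω)
      + (angularFourier b ω * conj (angularFourier a ω)
        + angularFourier b' ω * conj (angularFourier a' ω))) := by
  have hv_ae : v =ᵐ[volume] fun τ =>
      lam * (g τ + g (-τ) + (crossCorrelation a b τ + crossCorrelation a' b' τ)) := by
    filter_upwards [ae_integral_add_eq_crossCorrelation_add ha hb ha' hb'] with τ hτ
    rw [hv, hτ]
  have hab := ha.crossCorrelation hb
  have hab' := ha'.crossCorrelation hb'
  have hsym : Integrable (fun τ => g τ + g (-τ)) := hg.add hg.comp_neg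
  have hcross : Integrable (fun τ => crossCorrelation a b τ + crossCorrelation a' b' τ) :=
    hab.add hab'
  rw [angularFourier_congr_ae ω hv_ae, angularFourier_const_mul,
    angularFourier_add ω hsym hcross, angularFourier_add ω hg hg.comp_neg,
    angularFourier_add ω hab hab', angularFourier_comp_neg, angularFourier_crossCorrelation ω ha hb,
    angularFourier_crossCorrelation ω ha' hb']

end AngularFourier

lemma bisymmetric_spectral_factorization (lam : ℝ) (A B V W : ℂ)
    (hV : V = lam * (A + conj A + (A * conj A + B * conj B)))
    (hW : W = lam * (B + conj B + (B * conj A + A * conj B))) :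
    lam + V + W = ((lam * ‖1 + A + B‖ ^ 2 : ℝ) : ℂ) ∧
      lam + V - W = ((lam * ‖1 + A - B‖ ^ 2 : ℝ) : ℂ) := by
  simp only [ofReal_mul, ofReal_pow, ← mul_conj', map_add, map_sub, map_one, hV, hW]
  constructor <;> ring

theorem stmt_16_general (Ψ11 Ψ12 : ℝ → ℝ) (h11 : Integrable Ψ11) (h12 : Integrable Ψ12)
    (lam : ℝ)
    (v11 v12 : ℝ → ℝ)
    (hv11 : ∀ τ : ℝ, v11 τ =
      lam * (Ψ11 τ + Ψ11 (-τ) + ∫ s : ℝ, (Ψ11 (s - τ) * Ψ11 s + Ψ12 (s - τ) * Ψ12 s)))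
    (hv12 : ∀ τ : ℝ, v12 τ =
      lam * (Ψ12 τ + Ψ12 (-τ) + ∫ s : ℝ, (Ψ11 (s - τ) * Ψ12 s + Ψ12 (s - τ) * Ψ11 s))) :
    ∀ ω : ℝ,
      ((lam : ℂ) + (∫ τ : ℝ, Complex.exp (-(Complex.I * ω * τ)) * ((v11 τ : ℝ) : ℂ))
          + (∫ τ : ℝ, Complex.exp (-(Complex.I * ω * τ)) * ((v12 τ : ℝ) : ℂ)) =
        ((lam * ‖(1 : ℂ)
            + (∫ τ : ℝ, Complex.exp (-(Complex.I * ω * τ)) * ((Ψ11 τ : ℝ) : ℂ))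
            + (∫ τ : ℝ, Complex.exp (-(Complex.I * ω * τ)) * ((Ψ12 τ : ℝ) : ℂ))‖ ^ 2
          : ℝ) : ℂ)) ∧
      ((lam : ℂ) + (∫ τ : ℝ, Complex.exp (-(Complex.I * ω * τ)) * ((v11 τ : ℝ) : ℂ))
          - (∫ τ : ℝ, Complex.exp (-(Complex.I * ω * τ)) * ((v12 τ : ℝ) : ℂ)) =
        ((lam * ‖(1 : ℂ)
            + (∫ τ : ℝ, Complex.exp (-(Complex.I * ω * τ)) * ((Ψ11 τ : ℝ) : ℂ))
            - (∫ τ : ℝ, Complex.exp (-(Complex.I * ω * τ)) * ((Ψ12 τ : ℝ) : ℂ))‖ ^ 2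
          : ℝ) : ℂ)) := fun ω =>
  bisymmetric_spectral_factorization lam _ _ _ _
    (angularFourier_of_covariance_form ω h11 h11 h11 h12 h12 hv11)
    (angularFourier_of_covariance_form ω h12 h11 h12 h12 h11 hv12)

/-- Bisymmetric two-dimensional spectral factorization: with
`v¹¹(τ) = λ̄ (Ψ¹¹(τ) + Ψ¹¹(-τ) + ∫ [Ψ¹¹(s-τ)Ψ¹¹(s) + Ψ¹²(s-τ)Ψ¹²(s)] ds)` and
`v¹²(τ) = λ̄ (Ψ¹²(τ) + Ψ¹²(-τ) + ∫ [Ψ¹¹(s-τ)Ψ¹²(s) + Ψ¹²(s-τ)Ψ¹¹(s)] ds)`, one has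
`λ̄ + v̂¹¹(ω) + v̂¹²(ω) = λ̄ |1 + Ψ̂¹¹(ω) + Ψ̂¹²(ω)|²` and
`λ̄ + v̂¹¹(ω) - v̂¹²(ω) = λ̄ |1 + Ψ̂¹¹(ω) - Ψ̂¹²(ω)|²` for every `ω`,
where `f̂(ω) = ∫ e^{-iωτ} f(τ) dτ`. -/
theorem stmt_16 (Ψ11 Ψ12 : ℝ → ℝ) (h11 : Integrable Ψ11) (h12 : Integrable Ψ12)
    (lam : ℝ) (hlam : 0 < lam)
    (v11 v12 : ℝ → ℝ)
    (hv11 : ∀ τ : ℝ, v11 τ =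
      lam * (Ψ11 τ + Ψ11 (-τ) + ∫ s : ℝ, (Ψ11 (s - τ) * Ψ11 s + Ψ12 (s - τ) * Ψ12 s)))
    (hv12 : ∀ τ : ℝ, v12 τ =
      lam * (Ψ12 τ + Ψ12 (-τ) + ∫ s : ℝ, (Ψ11 (s - τ) * Ψ12 s + Ψ12 (s - τ) * Ψ11 s))) :
    ∀ ω : ℝ,
      ((lam : ℂ) + (∫ τ : ℝ, Complex.exp (-(Complex.I * ω * τ)) * ((v11 τ : ℝ) : ℂ))
          + (∫ τ : ℝ, Complex.exp (-(Complex.I * ω * τ)) * ((v12 τ : ℝ) : ℂ)) =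
        ((lam * ‖(1 : ℂ)
            + (∫ τ : ℝ, Complex.exp (-(Complex.I * ω * τ)) * ((Ψ11 τ : ℝ) : ℂ))
            + (∫ τ : ℝ, Complex.exp (-(Complex.I * ω * τ)) * ((Ψ12 τ : ℝ) : ℂ))‖ ^ 2
          : ℝ) : ℂ)) ∧
      ((lam : ℂ) + (∫ τ : ℝ, Complex.exp (-(Complex.I * ω * τ)) * ((v11 τ : ℝ) : ℂ))
          - (∫ τ : ℝ, Complex.exp (-(Complex.I * ω * τ)) * ((v12 τ : ℝ) : ℂ)) =
        ((lam * ‖(1 : ℂ)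
            + (∫ τ : ℝ, Complex.exp (-(Complex.I * ω * τ)) * ((Ψ11 τ : ℝ) : ℂ))
            - (∫ τ : ℝ, Complex.exp (-(Complex.I * ω * τ)) * ((Ψ12 τ : ℝ) : ℂ))‖ ^ 2
          : ℝ) : ℂ)) :=
  stmt_16_general Ψ11 Ψ12 h11 h12 lam v11 v12 hv11 hv12
end
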